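/- Let γ_o(x|m_H) := (1/m_H)(2E(x,m_H) + (m_H−2)F(x,m_H), −2√(1 − m_H sin²x)). Then γ_o(−π/4|m_H) = γ_o(5π/4|m_H), the unit tangents at −π/4 and 5π/4 are opposite (in fact (γ_o^{(1)})′(±) vanish there and (γ_o^{(2)})′(−π/4|m_H) = −(γ_o^{(2)})′(5π/4|m_H)), and γ_o(·|m_H) restricted to [−π/4, 5π/4) is injective. In other words, the heart-shaped elastica is an embedded cuspidal elastica. -/

import Mathlib

open Real MeasureTheory Set

noncomputable section

abbrev E2 := EuclideanSpace ℝ (Fin 2)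

/-- The point of the Euclidean plane with coordinates `(a, b)`. -/
def mkE2 (a b : ℝ) : E2 := WithLp.toLp 2 ![a, b]
/-- Incomplete elliptic integral of the first kind `F(x,m)`. -/
def Fell (x m : ℝ) : ℝ := ∫ θ in (0:ℝ)..x, 1 / Real.sqrt (1 - m * Real.sin θ ^ 2)

/-- Incomplete elliptic integral of the second kind `E(x,m)`. -/
def Eell (x m : ℝ) : ℝ := ∫ θ in (0:ℝ)..x, Real.sqrt (1 - m * Real.sin θ ^ 2)

/-- Complete elliptic integral of the first kind `K(m)`. -/
def Kc (m : ℝ) : ℝ := Fell (Real.pi / 2) m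

/-- Complete elliptic integral of the second kind `E(m)`. -/
def Ec (m : ℝ) : ℝ := Eell (Real.pi / 2) m

/-- `α(m) = arcsin √(1/(2m))`. -/
def alph (m : ℝ) : ℝ := Real.arcsin (Real.sqrt (1 / (2 * m)))

/-- `G(x,m) = ∫₀ˣ (1 − 2m sin²θ)(1 − m sin²θ)^{−1/2} dθ = 2E(x,m) − F(x,m)`. -/
def Gw (x m : ℝ) : ℝ :=
  ∫ θ in (0:ℝ)..x, (1 - 2 * m * Real.sin θ ^ 2) / Real.sqrt (1 - m * Real.sin θ ^ 2)

/-- `f(m) = ∫₀^{π−α(m)} (1 − 2m sin²θ)(1 − m sin²θ)^{−1/2} dθ`; its unique zero is `m_T`. -/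
def fT (m : ℝ) : ℝ := Gw (Real.pi - alph m) m
/-- `g(m) = ∫_{−π/4}^{5π/4} (1 − 2 sin²θ)(1 − m sin²θ)^{−1/2} dθ`; its unique zero is `m_H`. -/
def gH (m : ℝ) : ℝ :=
  ∫ θ in (-(Real.pi / 4))..(5 * Real.pi / 4),
    (1 - 2 * Real.sin θ ^ 2) / Real.sqrt (1 - m * Real.sin θ ^ 2)
/-- First component of the orbitlike parametrization. -/
def gammaO1 (m : ℝ) : ℝ → ℝ := fun x => (2 * Eell x m + (m - 2) * Fell x m) / m

/-- Second component of the orbitlike parametrization. -/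
def gammaO2 (m : ℝ) : ℝ → ℝ := fun x => -2 * Real.sqrt (1 - m * Real.sin x ^ 2) / m

/-- The orbitlike parametrization `γ_o(x|m) = (1/m)(2E(x,m) + (m−2)F(x,m), −2√(1 − m sin²x))`. -/
def gammaO (m : ℝ) : ℝ → E2 := fun x => mkE2 (gammaO1 m x) (gammaO2 m x)

/-! The first coordinate of `γ_o(·|m)` is the primitive `x ↦ ∫₀ˣ cos 2θ / √(1 - m sin²θ) dθ` of an
even `π`-periodic function, so it is odd and satisfies `γ₁(x + kπ) = γ₁(x) + k γ₁(π)`; since `g` is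
the integral of the same function over `[-π/4, 5π/4]`, the condition `g(m_H) = 0` closes the curve
and forces `γ₁(π) = -2 γ₁(π/4)`. The second coordinate determines `sin² x`, so two parameters with
the same image differ by `kπ` or add up to `kπ`. In the first case `γ₁(π) ≠ 0` separates them; in
the second, `γ₁` would have to take the value `-k γ₁(π/4)` at a point where its monotonicity on
`[-π/4, π/4]` and `[π/4, 3π/4]` forbids it. -/

lemma mkE2_inj {a b c d : ℝ} : mkE2 a b = mkE2 c d ↔ a = c ∧ b = d := by
  constructor
  · intro h
    exact ⟨by simpa [mkE2] using congrArg (· 0) h, by simpa [mkE2] using congrArg (· 1) h⟩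
  · rintro ⟨rfl, rfl⟩
    rfl

lemma neg_mkE2 (a b : ℝ) : -mkE2 a b = mkE2 (-a) (-b) := by
  ext i
  fin_cases i <;> simp [mkE2]

lemma HasDerivAt.mkE2 {f g : ℝ → ℝ} {a b x : ℝ} (hf : HasDerivAt f a x) (hg : HasDerivAt g b x) :
    HasDerivAt (fun t => _root_.mkE2 (f t) (g t)) (_root_.mkE2 a b) x := by
  have hsplit : ∀ a b : ℝ, _root_.mkE2 a b = a • _root_.mkE2 1 0 + b • _root_.mkE2 0 1 :=
    fun a b => by
      ext i
      fin_cases i <;> simp [_root_.mkE2]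
  have h := (hf.smul_const (_root_.mkE2 1 0)).add (hg.smul_const (_root_.mkE2 0 1))
  rw [← hsplit] at h
  exact h.congr_of_eventuallyEq (.of_forall fun t => hsplit _ _)

lemma exists_int_of_sin_sq_eq_sin_sq {x y : ℝ} (h : sin x ^ 2 = sin y ^ 2) :
    ∃ k : ℤ, y = x + k * π ∨ y = k * π - x := by
  have hcos : cos (2 * x) = cos (2 * y) := by
    rw [cos_two_mul_eq_one_sub, cos_two_mul_eq_one_sub, h]
  obtain ⟨k, hk | hk⟩ := cos_eq_cos_iff.1 hcos
  exacts [⟨k, Or.inl (by linarith)⟩, ⟨k, Or.inr (by linarith)⟩]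

lemma sin_five_pi_div_four : sin (5 * π / 4) = sin (-(π / 4)) := by
  rw [show 5 * π / 4 = π / 4 + π by ring, sin_add_pi, sin_neg]

lemma cos_five_pi_div_four : cos (5 * π / 4) = -cos (-(π / 4)) := by
  rw [show 5 * π / 4 = π / 4 + π by ring, cos_add_pi, cos_neg]

def gammaO1Deriv (m θ : ℝ) : ℝ := (1 - 2 * sin θ ^ 2) / √(1 - m * sin θ ^ 2)

section Orbitlike

variable {m : ℝ}

lemma one_sub_mul_sin_sq_pos (hm : m < 1) (θ : ℝ) : 0 < 1 - m * sin θ ^ 2 := by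
  rcases le_or_gt 0 m with h | h
  · nlinarith [mul_le_mul_of_nonneg_left (sin_sq_le_one θ) h]
  · nlinarith [mul_nonneg (neg_nonneg.2 h.le) (sq_nonneg (sin θ))]

lemma sqrt_one_sub_mul_sin_sq_pos (hm : m < 1) (θ : ℝ) : 0 < √(1 - m * sin θ ^ 2) :=
  sqrt_pos.2 (one_sub_mul_sin_sq_pos hm θ)

lemma continuous_gammaO1Deriv (hm : m < 1) : Continuous (gammaO1Deriv m) :=
  (by fun_prop : Continuous fun θ => 1 - 2 * sin θ ^ 2).div (by fun_prop)
    fun θ => (sqrt_one_sub_mul_sin_sq_pos hm θ).ne'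

lemma gammaO1Deriv_eq_cos_div (θ : ℝ) :
    gammaO1Deriv m θ = cos (2 * θ) / √(1 - m * sin θ ^ 2) := by
  rw [gammaO1Deriv, cos_two_mul_eq_one_sub]

lemma gammaO1Deriv_neg (θ : ℝ) : gammaO1Deriv m (-θ) = gammaO1Deriv m θ := by
  simp [gammaO1Deriv]

lemma gammaO1Deriv_periodic : Function.Periodic (gammaO1Deriv m) π := fun θ => by
  simp [gammaO1Deriv, sin_add_pi]

lemma hasDerivAt_gammaO1 (hm0 : m ≠ 0) (hm1 : m < 1) (x : ℝ) :
    HasDerivAt (gammaO1 m) (gammaO1Deriv m x) x := by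
  have hE : HasDerivAt (Eell · m) (√(1 - m * sin x ^ 2)) x :=
    (Continuous.integral_hasStrictDerivAt (by fun_prop) 0 x).hasDerivAt
  have hF : HasDerivAt (Fell · m) (1 / √(1 - m * sin x ^ 2)) x :=
    (Continuous.integral_hasStrictDerivAt (continuous_const.div (by fun_prop)
      fun θ => (sqrt_one_sub_mul_sin_sq_pos hm1 θ).ne') 0 x).hasDerivAt
  refine (((hE.const_mul 2).add (hF.const_mul (m - 2))).div_const m).congr_deriv ?_
  have hs := sqrt_one_sub_mul_sin_sq_pos hm1 x
  rw [gammaO1Deriv, div_eq_div_iff hm0 hs.ne']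
  field_simp
  rw [sq_sqrt (one_sub_mul_sin_sq_pos hm1 x).le]
  ring

lemma hasDerivAt_gammaO2 (hm0 : m ≠ 0) (hm1 : m < 1) (x : ℝ) :
    HasDerivAt (gammaO2 m) (2 * sin x * cos x / √(1 - m * sin x ^ 2)) x := by
  have hsin : HasDerivAt (fun x => 1 - m * sin x ^ 2) (-(m * (2 * sin x * cos x))) x := by
    simpa [mul_comm] using (((hasDerivAt_sin x).pow 2).const_mul m).const_sub 1
  refine (((hsin.sqrt (one_sub_mul_sin_sq_pos hm1 x).ne').const_mul (-2)).div_const m).congr_deriv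
    ?_
  field_simp

lemma gammaO1_zero : gammaO1 m 0 = 0 := by
  simp [gammaO1, Eell, Fell]

lemma gammaO1_sub_gammaO1 (hm0 : m ≠ 0) (hm1 : m < 1) (a b : ℝ) :
    gammaO1 m b - gammaO1 m a = ∫ θ in a..b, gammaO1Deriv m θ :=
  (intervalIntegral.integral_eq_sub_of_hasDerivAt (fun x _ => hasDerivAt_gammaO1 hm0 hm1 x)
    ((continuous_gammaO1Deriv hm1).intervalIntegrable a b)).symm

lemma gH_eq_gammaO1_sub (hm0 : m ≠ 0) (hm1 : m < 1) :
    gH m = gammaO1 m (5 * π / 4) - gammaO1 m (-(π / 4)) :=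
  (gammaO1_sub_gammaO1 hm0 hm1 _ _).symm

lemma gammaO1_neg (hm0 : m ≠ 0) (hm1 : m < 1) (x : ℝ) : gammaO1 m (-x) = -gammaO1 m x := by
  have hx := gammaO1_sub_gammaO1 hm0 hm1 0 x
  have hnx := gammaO1_sub_gammaO1 hm0 hm1 (-x) 0
  have hsym : ∫ θ in (-x)..0, gammaO1Deriv m θ = ∫ θ in (0 : ℝ)..x, gammaO1Deriv m θ := by
    simpa [gammaO1Deriv_neg] using
      (intervalIntegral.integral_comp_neg (a := 0) (b := x) (gammaO1Deriv m)).symm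
  rw [gammaO1_zero] at hx hnx
  linarith

lemma gammaO1_add_int_mul_pi (hm0 : m ≠ 0) (hm1 : m < 1) (x : ℝ) (k : ℤ) :
    gammaO1 m (x + k * π) = gammaO1 m x + k * gammaO1 m π := by
  have hint : ∀ a b, IntervalIntegrable (gammaO1Deriv m) volume a b :=
    (continuous_gammaO1Deriv hm1).intervalIntegrable
  have hshift := gammaO1Deriv_periodic.intervalIntegral_add_zsmul_eq k x hint
  rw [gammaO1Deriv_periodic.intervalIntegral_add_eq x 0, zero_add, zsmul_eq_mul,
    ← gammaO1_sub_gammaO1 hm0 hm1, ← gammaO1_sub_gammaO1 hm0 hm1, gammaO1_zero, sub_zero,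
    zsmul_eq_mul] at hshift
  linarith

lemma differentiable_gammaO1 (hm0 : m ≠ 0) (hm1 : m < 1) : Differentiable ℝ (gammaO1 m) :=
  fun x => (hasDerivAt_gammaO1 hm0 hm1 x).differentiableAt

lemma strictMonoOn_gammaO1 (hm0 : m ≠ 0) (hm1 : m < 1) :
    StrictMonoOn (gammaO1 m) (Icc (-(π / 4)) (π / 4)) := by
  refine strictMonoOn_of_deriv_pos (convex_Icc _ _)
    (differentiable_gammaO1 hm0 hm1).continuous.continuousOn fun x hx => ?_
  rw [interior_Icc] at hx
  rw [(hasDerivAt_gammaO1 hm0 hm1 x).deriv, gammaO1Deriv_eq_cos_div]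
  exact div_pos (cos_pos_of_mem_Ioo ⟨by linarith [hx.1], by linarith [hx.2]⟩)
    (sqrt_one_sub_mul_sin_sq_pos hm1 x)

lemma strictAntiOn_gammaO1 (hm0 : m ≠ 0) (hm1 : m < 1) :
    StrictAntiOn (gammaO1 m) (Icc (π / 4) (3 * π / 4)) := by
  refine strictAntiOn_of_deriv_neg (convex_Icc _ _)
    (differentiable_gammaO1 hm0 hm1).continuous.continuousOn fun x hx => ?_
  rw [interior_Icc] at hx
  rw [(hasDerivAt_gammaO1 hm0 hm1 x).deriv, gammaO1Deriv_eq_cos_div]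
  exact div_neg_of_neg_of_pos
    (cos_neg_of_pi_div_two_lt_of_lt (by linarith [hx.1]) (by linarith [hx.2]))
    (sqrt_one_sub_mul_sin_sq_pos hm1 x)

lemma gammaO1_neg_of_mem_Ico (hm0 : m ≠ 0) (hm1 : m < 1) {x : ℝ} (hx : x ∈ Ico (-(π / 4)) 0) :
    gammaO1 m x < 0 := by
  have := strictMonoOn_gammaO1 hm0 hm1 ⟨hx.1, by linarith [hx.2, pi_pos]⟩
    ⟨by linarith [pi_pos], by linarith [pi_pos]⟩ hx.2
  rwa [gammaO1_zero] at this

lemma gammaO1_pi_div_four_pos (hm0 : m ≠ 0) (hm1 : m < 1) : 0 < gammaO1 m (π / 4) := by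
  simpa [gammaO1_neg hm0 hm1] using
    gammaO1_neg_of_mem_Ico hm0 hm1 (x := -(π / 4)) ⟨le_rfl, by linarith [pi_pos]⟩

lemma sin_sq_eq_of_gammaO2_eq (hm0 : m ≠ 0) (hm1 : m < 1) {x y : ℝ}
    (h : gammaO2 m x = gammaO2 m y) : sin x ^ 2 = sin y ^ 2 := by
  have hsqrt : √(1 - m * sin x ^ 2) = √(1 - m * sin y ^ 2) := by
    simp only [gammaO2] at h
    field_simp at h
    linarith
  rw [sqrt_inj (one_sub_mul_sin_sq_pos hm1 x).le (one_sub_mul_sin_sq_pos hm1 y).le] at hsqrt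
  exact mul_left_cancel₀ hm0 (by linarith)

lemma gammaO1_pi_of_gH_eq_zero (hm0 : m ≠ 0) (hm1 : m < 1) (hg : gH m = 0) :
    gammaO1 m π = -2 * gammaO1 m (π / 4) := by
  have h := gammaO1_add_int_mul_pi hm0 hm1 (π / 4) 1
  rw [Int.cast_one, one_mul, show π / 4 + π = 5 * π / 4 by ring] at h
  rw [gH_eq_gammaO1_sub hm0 hm1, h, gammaO1_neg hm0 hm1] at hg
  linarith

lemma neg_gammaO1_pi_div_four_lt (hm0 : m ≠ 0) (hm1 : m < 1) (hg : gH m = 0) {x : ℝ}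
    (hx : x ∈ Ioo (-(π / 4)) (π / 2)) : -gammaO1 m (π / 4) < gammaO1 m x := by
  rcases le_or_gt x (π / 4) with hx4 | hx4
  · rw [← gammaO1_neg hm0 hm1]
    exact strictMonoOn_gammaO1 hm0 hm1 ⟨le_rfl, by linarith [pi_pos]⟩ ⟨hx.1.le, hx4⟩ hx.1
  · have hhalf : gammaO1 m (π / 2) = -gammaO1 m (π / 4) := by
      have h := gammaO1_add_int_mul_pi hm0 hm1 (-(π / 2)) 1
      rw [Int.cast_one, one_mul, show -(π / 2) + π = π / 2 by ring, gammaO1_neg hm0 hm1,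
        gammaO1_pi_of_gH_eq_zero hm0 hm1 hg] at h
      linarith
    rw [← hhalf]
    exact strictAntiOn_gammaO1 hm0 hm1 ⟨hx4.le, by linarith [hx.2, pi_pos]⟩
      ⟨by linarith [pi_pos], by linarith [pi_pos]⟩ hx.2

lemma gammaO1_ne_neg_int_mul (hm0 : m ≠ 0) (hm1 : m < 1) (hg : gH m = 0) {x : ℝ} {k : ℤ}
    (hx : -(π / 4) ≤ x) (hxk : x < k * π - x) (hk : k * π - x < 5 * π / 4) :
    gammaO1 m x ≠ -k * gammaO1 m (π / 4) := by
  have hk0 : 0 ≤ k := by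
    have : (-1 : ℝ) < k := by nlinarith [pi_pos]
    have : (-1 : ℤ) < k := by exact_mod_cast this
    omega
  have hk2 : k ≤ 2 := by
    have : (k : ℝ) < 3 := by nlinarith [pi_pos]
    have : k < 3 := by exact_mod_cast this
    omega
  interval_cases k <;> push_cast at hxk hk ⊢
  · simpa using (gammaO1_neg_of_mem_Ico hm0 hm1 ⟨hx, by linarith⟩).ne
  · rw [neg_one_mul]
    exact (neg_gammaO1_pi_div_four_lt hm0 hm1 hg ⟨by linarith, by linarith⟩).ne'
  · have h := gammaO1_add_int_mul_pi hm0 hm1 (x - π) 1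
    simp only [Int.cast_one, one_mul, sub_add_cancel, gammaO1_pi_of_gH_eq_zero hm0 hm1 hg] at h
    have := gammaO1_neg_of_mem_Ico hm0 hm1 (x := x - π) ⟨by linarith, by linarith⟩
    exact (by linarith : gammaO1 m x < -2 * gammaO1 m (π / 4)).ne

lemma injOn_gammaO (hm0 : m ≠ 0) (hm1 : m < 1) (hg : gH m = 0) :
    InjOn (gammaO m) (Ico (-(π / 4)) (5 * π / 4)) := by
  suffices key : ∀ x ∈ Ico (-(π / 4)) (5 * π / 4), ∀ y ∈ Ico (-(π / 4)) (5 * π / 4),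
      x < y → gammaO m x ≠ gammaO m y by
    intro x hx y hy hxy
    by_contra hne
    rcases lt_or_gt_of_ne hne with h | h
    exacts [key x hx y hy h hxy, key y hy x hx h hxy.symm]
  intro x hx y hy hxy hγ
  obtain ⟨h1, h2⟩ := mkE2_inj.1 hγ
  obtain ⟨k, rfl | rfl⟩ := exists_int_of_sin_sq_eq_sin_sq (sin_sq_eq_of_gammaO2_eq hm0 hm1 h2)
  · rw [gammaO1_add_int_mul_pi hm0 hm1, gammaO1_pi_of_gH_eq_zero hm0 hm1 hg] at h1
    have hk : (k : ℝ) * gammaO1 m (π / 4) = 0 := by linarith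
    rw [mul_eq_zero, or_iff_left (gammaO1_pi_div_four_pos hm0 hm1).ne'] at hk
    simp [hk] at hxy
  · rw [show k * π - x = -x + k * π by ring, gammaO1_add_int_mul_pi hm0 hm1, gammaO1_neg hm0 hm1,
      gammaO1_pi_of_gH_eq_zero hm0 hm1 hg] at h1
    exact gammaO1_ne_neg_int_mul hm0 hm1 hg hx.1 hxy hy.2 (by linarith)

end Orbitlike

/-- Proposition 2.24: the heart-shaped elastica is an embedded cuspidal
elastica: `γ_o(−π/4|m_H) = γ_o(5π/4|m_H)`, the first component has vanishing derivative at
both endpoints while the derivatives of the second component are opposite there (so the unit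
tangents at the endpoints are opposite), and `γ_o(·|m_H)` is injective on `[−π/4, 5π/4)`. -/
theorem stmt15 (mH : ℝ) (hmH : mH ∈ Set.Ioo (0:ℝ) 1) (hmHzero : gH mH = 0) :
    gammaO mH (-(Real.pi / 4)) = gammaO mH (5 * Real.pi / 4) ∧
    deriv (gammaO1 mH) (-(Real.pi / 4)) = 0 ∧
    deriv (gammaO1 mH) (5 * Real.pi / 4) = 0 ∧
    deriv (gammaO2 mH) (-(Real.pi / 4)) = -deriv (gammaO2 mH) (5 * Real.pi / 4) ∧
    (‖deriv (gammaO mH) (-(Real.pi / 4))‖)⁻¹ • deriv (gammaO mH) (-(Real.pi / 4)) =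
      -((‖deriv (gammaO mH) (5 * Real.pi / 4)‖)⁻¹ • deriv (gammaO mH) (5 * Real.pi / 4)) ∧
    Set.InjOn (gammaO mH) (Set.Ico (-(Real.pi / 4)) (5 * Real.pi / 4)) := by
  have hm0 := hmH.1.ne'
  have hm1 := hmH.2
  have hd1 : ∀ x, deriv (gammaO1 mH) x = gammaO1Deriv mH x :=
    fun x => (hasDerivAt_gammaO1 hm0 hm1 x).deriv
  have hd : ∀ x, deriv (gammaO mH) x = mkE2 (deriv (gammaO1 mH) x) (deriv (gammaO2 mH) x) :=
    fun x => ((hasDerivAt_gammaO1 hm0 hm1 x).differentiableAt.hasDerivAt.mkE2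
      (hasDerivAt_gammaO2 hm0 hm1 x).differentiableAt.hasDerivAt).deriv
  have hstart : deriv (gammaO1 mH) (-(π / 4)) = 0 := by
    rw [hd1, gammaO1Deriv_eq_cos_div, show 2 * -(π / 4) = -(π / 2) by ring, cos_neg,
      cos_pi_div_two, zero_div]
  have hend : deriv (gammaO1 mH) (5 * π / 4) = 0 := by
    rwa [hd1, gammaO1Deriv, sin_five_pi_div_four, ← gammaO1Deriv, ← hd1]
  have hd2 : deriv (gammaO2 mH) (-(π / 4)) = -deriv (gammaO2 mH) (5 * π / 4) := by
    rw [(hasDerivAt_gammaO2 hm0 hm1 _).deriv, (hasDerivAt_gammaO2 hm0 hm1 _).deriv,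
      sin_five_pi_div_four, cos_five_pi_div_four]
    ring
  have hclosed : gammaO1 mH (-(π / 4)) = gammaO1 mH (5 * π / 4) := by
    linarith [gH_eq_gammaO1_sub hm0 hm1]
  have htangent : deriv (gammaO mH) (-(π / 4)) = -deriv (gammaO mH) (5 * π / 4) := by
    rw [hd, hd, hstart, hend, hd2, neg_mkE2, neg_zero]
  refine ⟨?_, hstart, hend, hd2, ?_, injOn_gammaO hm0 hm1 hmHzero⟩
  · simp only [gammaO, gammaO2, hclosed, sin_five_pi_div_four]
  · rw [htangent, norm_neg, smul_neg]
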